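/- Let F₁ : X ⇉ Y be a polyhedral convex set-valued mapping and F₂ : X ⇉ Y a generalized polyhedral convex set-valued mapping. Then for every (x̄, ȳ) ∈ gph(F₁+F₂), every decomposition ȳ = ȳ₁ + ȳ₂ with ȳᵢ ∈ Fᵢ(x̄), and every v* ∈ Y*, one has D*(F₁+F₂)(x̄, ȳ)(v*) = D*F₁(x̄, ȳ₁)(v*) + D*F₂(x̄, ȳ₂)(v*). -/

import Mathlib

open Set Pointwise

def IsPolyhedral {X : Type*} [AddCommGroup X] [Module ℝ X] [TopologicalSpace X]
    (P : Set X) : Prop :=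
  ∃ (m : ℕ) (f : Fin m → X →L[ℝ] ℝ) (α : Fin m → ℝ),
    P = {x : X | ∀ i, f i x ≤ α i}

def IsGPolyhedral {X : Type*} [AddCommGroup X] [Module ℝ X] [TopologicalSpace X]
    (Q : Set X) : Prop :=
  ∃ (P : Set X) (a : X) (L : Submodule ℝ X),
    IsPolyhedral P ∧ IsClosed (L : Set X) ∧ Q = P ∩ (a +ᵥ (L : Set X))

def normalCone {X : Type*} [AddCommGroup X] [Module ℝ X] [TopologicalSpace X]
    (Ω : Set X) (xb : X) : Set (X →L[ℝ] ℝ) :=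
  {f | ∀ x ∈ Ω, f (x - xb) ≤ 0}

def gph {X Y : Type*} (F : X → Set Y) : Set (X × Y) := {p | p.2 ∈ F p.1}

def coderiv {X Y : Type*} [AddCommGroup X] [Module ℝ X] [TopologicalSpace X]
    [AddCommGroup Y] [Module ℝ Y] [TopologicalSpace Y]
    (F : X → Set Y) (xb : X) (yb : Y) (v : Y →L[ℝ] ℝ) : Set (X →L[ℝ] ℝ) :=
  {u | ∀ x : X, ∀ y ∈ F x, u (x - xb) - v (y - yb) ≤ 0}

def epi {X : Type*} (f : X → EReal) : Set (X × ℝ) := {p | f p.1 ≤ (p.2 : EReal)}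

def subdiff {X : Type*} [AddCommGroup X] [Module ℝ X] [TopologicalSpace X]
    (f : X → EReal) (xb : X) : Set (X →L[ℝ] ℝ) :=
  {g | ∀ x : X, ((g (x - xb) : ℝ) : EReal) + f xb ≤ f x}

def singSubdiff {X : Type*} [AddCommGroup X] [Module ℝ X] [TopologicalSpace X]
    (f : X → EReal) (xb : X) : Set (X →L[ℝ] ℝ) :=
  {g | ∀ x : X, ∀ α : ℝ, f x ≤ (α : EReal) → g (x - xb) ≤ 0}

/-!
Lift to `X × Y × Y`: there `u ∈ D*(F₁ + F₂)(x̄, ȳ₁ + ȳ₂)(v)` says that `(u, -v, -v)` is normal at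
`(x̄, ȳ₁, ȳ₂)` to the intersection of the cylinders `{y₁ ∈ F₁ x}` (polyhedral) and `{y₂ ∈ F₂ x}`
(generalized polyhedral). For such sets the normal cone of the intersection is the sum of the
normal cones: a direction in the linear part `L` on which every active constraint is nonpositive
stays feasible for a short time, so by Farkas' lemma a normal functional agrees on `L` with a
nonnegative combination of active constraints, and this combination splits into a normal to each
set. A normal to the first cylinder ignores `y₂` and one to the second ignores `y₁`; evaluating on
the coordinate axes gives `u = u₁ + u₂` with `uᵢ ∈ D*Fᵢ(x̄, ȳᵢ)(v)`.
-/

open Filter Topology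

section Algebraic

variable {E ι : Type*} [AddCommGroup E] [Module ℝ E]

theorem exists_nonneg_sum_insert_smul_eq [DecidableEq ι] {s : Finset ι} {a : ι} (ha : a ∉ s)
    (f : ι → E) {t : ℝ} (ht : 0 ≤ t) {c : ι → ℝ} (hc : ∀ i, 0 ≤ c i) :
    ∃ c' : ι → ℝ, (∀ i, 0 ≤ c' i) ∧
      ∑ i ∈ insert a s, c' i • f i = t • f a + ∑ i ∈ s, c i • f i := by
  refine ⟨Function.update c a t, fun i => ?_, ?_⟩
  · rcases eq_or_ne i a with rfl | hi
    · simpa using ht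
    · simpa [hi] using hc i
  · rw [Finset.sum_insert ha, Function.update_self]
    congr 1
    refine Finset.sum_congr rfl fun i hi => ?_
    rw [Function.update_of_ne (ne_of_mem_of_not_mem hi ha)]

/-- Farkas' lemma, proved by Fourier–Motzkin elimination of one constraint at a time. -/
theorem exists_nonneg_sum_smul_eq_of_nonpos (s : Finset ι) (f : ι → E →ₗ[ℝ] ℝ)
    (g : E →ₗ[ℝ] ℝ) (h : ∀ w, (∀ i ∈ s, f i w ≤ 0) → g w ≤ 0) :
    ∃ c : ι → ℝ, (∀ i, 0 ≤ c i) ∧ g = ∑ i ∈ s, c i • f i := by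
  classical
  induction s using Finset.induction_on generalizing f g with
  | empty =>
    refine ⟨0, fun _ => le_rfl, LinearMap.ext fun w => ?_⟩
    have hpos := h w (by simp)
    have hneg := h (-w) (by simp)
    simp only [map_neg, Finset.sum_empty, LinearMap.zero_apply] at hneg ⊢
    linarith
  | insert a s ha ih =>
    suffices ∃ t : ℝ, 0 ≤ t ∧ ∃ c : ι → ℝ, (∀ i, 0 ≤ c i) ∧ g = t • f a + ∑ i ∈ s, c i • f i by
      obtain ⟨t, ht, c, hc, rfl⟩ := this
      obtain ⟨c', hc', hsum⟩ := exists_nonneg_sum_insert_smul_eq ha f ht hc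
      exact ⟨c', hc', hsum.symm⟩
    by_cases hs : ∀ w, (∀ i ∈ s, f i w ≤ 0) → g w ≤ 0
    · obtain ⟨c, hc, rfl⟩ := ih f g hs
      exact ⟨0, le_rfl, c, hc, by rw [zero_smul, zero_add]⟩
    push Not at hs
    obtain ⟨w₀, hw₀, hgw₀⟩ := hs
    have ha₀ : 0 < f a w₀ := by
      by_contra! ha₀
      exact (h w₀ (Finset.forall_mem_insert .. |>.mpr ⟨ha₀, hw₀⟩)).not_gt hgw₀
    -- Projecting along `w₀` onto `ker (f a)` eliminates the constraint `f a`.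
    set P : E →ₗ[ℝ] E := LinearMap.id - (f a w₀)⁻¹ • (f a).smulRight w₀
    have hPw : ∀ w, P w = w - (f a w / f a w₀) • w₀ := fun w => by
      simp [P, div_eq_inv_mul, mul_smul]
    have hP : ∀ w, f a (P w) = 0 := fun w => by
      rw [hPw, map_sub, map_smul, smul_eq_mul, div_mul_cancel₀ _ ha₀.ne', sub_self]
    have hsplit : ∀ (φ : E →ₗ[ℝ] ℝ) w, φ w = φ (P w) + φ w₀ / f a w₀ * f a w := fun φ w => by
      rw [hPw, map_sub, map_smul, smul_eq_mul]
      ring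
    obtain ⟨c, hc, hcg⟩ := ih (fun i => (f i).comp P) (g.comp P) fun w hw =>
      h (P w) (Finset.forall_mem_insert .. |>.mpr ⟨(hP w).le, hw⟩)
    have hcw₀ : ∑ i ∈ s, c i * f i w₀ ≤ 0 :=
      Finset.sum_nonpos fun i hi => mul_nonpos_of_nonneg_of_nonpos (hc i) (hw₀ i hi)
    refine ⟨(g w₀ - ∑ i ∈ s, c i * f i w₀) / f a w₀, div_nonneg (by linarith) ha₀.le, c, hc,
      LinearMap.ext fun w => ?_⟩
    have hgw := LinearMap.congr_fun hcg w
    simp only [LinearMap.comp_apply, LinearMap.sum_apply, LinearMap.smul_apply,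
      smul_eq_mul, LinearMap.add_apply] at hgw ⊢
    have hfw : ∑ i ∈ s, c i * f i w
        = ∑ i ∈ s, c i * f i (P w) + (∑ i ∈ s, c i * f i w₀) / f a w₀ * f a w := by
      rw [Finset.sum_div, Finset.sum_mul, ← Finset.sum_add_distrib]
      exact Finset.sum_congr rfl fun i _ => by rw [hsplit (f i) w]; ring
    rw [hsplit g w, hgw, hfw]
    ring

theorem eventually_add_smul_mem_polyhedron [Finite ι] (f : ι → E →ₗ[ℝ] ℝ) (α : ι → ℝ) {z d : E}
    (hz : ∀ i, f i z ≤ α i) (hd : ∀ i, f i z = α i → f i d ≤ 0) :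
    ∀ᶠ t in 𝓝[>] (0 : ℝ), ∀ i, f i (z + t • d) ≤ α i := by
  refine eventually_all.mpr fun i => ?_
  simp only [map_add, map_smul, smul_eq_mul]
  rcases (hz i).lt_or_eq with hlt | heq
  · have hcont : Continuous fun t : ℝ => f i z + t * f i d := by fun_prop
    have hlim : Tendsto (fun t : ℝ => f i z + t * f i d) (𝓝 0) (𝓝 (f i z)) :=
      hcont.tendsto' 0 _ (by simp)
    exact (tendsto_nhdsWithin_of_tendsto_nhds hlim).eventually (eventually_le_nhds hlt)
  · filter_upwards [self_mem_nhdsWithin] with t (ht : 0 < t)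
    nlinarith [hd i heq]

theorem vadd_submodule_eq_of_mem {L : Submodule ℝ E} {a z : E} (hz : z ∈ a +ᵥ (L : Set E)) :
    a +ᵥ (L : Set E) = z +ᵥ (L : Set E) := by
  obtain ⟨l, hl, rfl⟩ := hz
  rw [Submodule.vadd_set_eq_vadd_set_iff, SModEq.sub_mem]
  simpa using L.neg_mem hl

end Algebraic

section NormalCone

variable {E F ι : Type*} [AddCommGroup E] [Module ℝ E] [TopologicalSpace E]
  [AddCommGroup F] [Module ℝ F] [TopologicalSpace F]

theorem sum_smul_mem_normalCone [Fintype ι] (f : ι → E →L[ℝ] ℝ) (α : ι → ℝ) (z : E) {c : ι → ℝ}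
    (hc : ∀ i, 0 ≤ c i) (hslack : ∀ i, f i z < α i → c i = 0) :
    ∑ i, c i • f i ∈ normalCone {x | ∀ i, f i x ≤ α i} z := by
  intro x hx
  simp only [FunLike.coe_sum, Finset.sum_apply, FunLike.coe_smul, Pi.smul_apply, smul_eq_mul]
  refine Finset.sum_nonpos fun i _ => ?_
  rcases lt_or_ge (f i z) (α i) with hlt | hge
  · simp [hslack i hlt]
  · exact mul_nonpos_of_nonneg_of_nonpos (hc i) (by simpa using (hx i).trans hge)

theorem exists_active_multipliers_of_mem_normalCone [Fintype ι] (f : ι → E →L[ℝ] ℝ) (α : ι → ℝ)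
    (L : Submodule ℝ E) {z : E} (hz : ∀ i, f i z ≤ α i) {φ : E →L[ℝ] ℝ}
    (hφ : φ ∈ normalCone ({x | ∀ i, f i x ≤ α i} ∩ (z +ᵥ (L : Set E))) z) :
    ∃ c : ι → ℝ, (∀ i, 0 ≤ c i) ∧ (∀ i, f i z < α i → c i = 0) ∧
      ∀ d ∈ L, φ d = ∑ i, c i * f i d := by
  classical
  set active := Finset.univ.filter fun i => f i z = α i
  obtain ⟨c, hc, hφc⟩ := exists_nonneg_sum_smul_eq_of_nonpos active
    (fun i => (f i : E →ₗ[ℝ] ℝ) ∘ₗ L.subtype) ((φ : E →ₗ[ℝ] ℝ) ∘ₗ L.subtype) <| by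
    rintro ⟨d, hd⟩ hactive
    have hfeas := eventually_add_smul_mem_polyhedron (fun i => (f i : E →ₗ[ℝ] ℝ)) α hz
      (d := d) fun i hi => hactive i (by simpa [active] using hi)
    obtain ⟨t, ht, ht0⟩ := (hfeas.and self_mem_nhdsWithin).exists
    have hstep := hφ (z + t • d) ⟨ht, vadd_mem_vadd_set (L.smul_mem t hd)⟩
    rw [add_sub_cancel_left, map_smul, smul_eq_mul] at hstep
    exact nonpos_of_mul_nonpos_right hstep ht0
  refine ⟨fun i => if f i z = α i then c i else 0, fun i => ?_, fun i hi => if_neg hi.ne,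
    fun d hd => ?_⟩
  · dsimp only
    split_ifs <;> simp [hc i]
  · have := LinearMap.congr_fun hφc ⟨d, hd⟩
    rw [LinearMap.sum_apply] at this
    simpa [active, Finset.sum_filter, ite_mul] using this

theorem add_normalCone_subset_normalCone_inter (Ω₁ Ω₂ : Set E) (z : E) :
    normalCone Ω₁ z + normalCone Ω₂ z ⊆ normalCone (Ω₁ ∩ Ω₂) z := by
  rintro _ ⟨φ₁, hφ₁, φ₂, hφ₂, rfl⟩ x ⟨hx₁, hx₂⟩
  simpa using add_nonpos (hφ₁ x hx₁) (hφ₂ x hx₂)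

theorem normalCone_inter_of_isPolyhedral_of_isGPolyhedral {Ω₁ Ω₂ : Set E}
    (h₁ : IsPolyhedral Ω₁) (h₂ : IsGPolyhedral Ω₂) {z : E} (hz : z ∈ Ω₁ ∩ Ω₂) :
    normalCone (Ω₁ ∩ Ω₂) z = normalCone Ω₁ z + normalCone Ω₂ z := by
  refine subset_antisymm (fun φ hφ => ?_) (add_normalCone_subset_normalCone_inter Ω₁ Ω₂ z)
  obtain ⟨m, p, α, rfl⟩ := h₁
  obtain ⟨_, a, L, ⟨n, q, β, rfl⟩, -, rfl⟩ := h₂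
  obtain ⟨hzp, hzq, hzL⟩ := hz
  rw [vadd_submodule_eq_of_mem hzL] at hφ ⊢
  have hinter : {x | ∀ i, p i x ≤ α i} ∩ ({x | ∀ j, q j x ≤ β j} ∩ (z +ᵥ (L : Set E))) =
      {x | ∀ k, Sum.elim p q k x ≤ Sum.elim α β k} ∩ (z +ᵥ (L : Set E)) := by
    ext x; simp [Sum.forall, and_assoc]
  rw [hinter] at hφ
  obtain ⟨c, hc, hslack, hφc⟩ := exists_active_multipliers_of_mem_normalCone (Sum.elim p q)
    (Sum.elim α β) L (Sum.forall.mpr ⟨hzp, hzq⟩) hφ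
  refine ⟨∑ i, c (.inl i) • p i, sum_smul_mem_normalCone p α z (fun i => hc _)
    (fun i => hslack (.inl i)), φ - ∑ i, c (.inl i) • p i, fun x ⟨hxq, hxL⟩ => ?_,
    add_sub_cancel _ _⟩
  have hxz : x - z ∈ L := by
    rwa [mem_vadd_set_iff_neg_vadd_mem, vadd_eq_add, neg_add_eq_sub] at hxL
  have hq := sum_smul_mem_normalCone q β z (fun j => hc _) (fun j => hslack (.inr j)) x hxq
  rw [sub_apply, hφc _ hxz, Fintype.sum_sum_type]
  simpa using hq

theorem IsPolyhedral.preimage {P : Set F} (hP : IsPolyhedral P) (A : E →L[ℝ] F) :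
    IsPolyhedral (A ⁻¹' P) := by
  obtain ⟨m, f, α, rfl⟩ := hP
  exact ⟨m, fun i => f i ∘L A, α, rfl⟩

theorem IsGPolyhedral.preimage {Q : Set F} (hQ : IsGPolyhedral Q) (A : E →L[ℝ] F)
    (hA : Function.Surjective A) : IsGPolyhedral (A ⁻¹' Q) := by
  obtain ⟨P, a, L, hP, hL, rfl⟩ := hQ
  obtain ⟨a', rfl⟩ := hA a
  refine ⟨A ⁻¹' P, a', L.comap (A : E →ₗ[ℝ] F), hP.preimage A, hL.preimage A.continuous, ?_⟩
  ext x
  simp [mem_vadd_set_iff_neg_vadd_mem, neg_add_eq_sub, ← map_sub]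

theorem normalCone_preimage_subset (A : E →L[ℝ] F) (B : F →L[ℝ] E)
    (hAB : Function.LeftInverse A B) {S : Set F} {z : E} (hz : A z ∈ S) :
    normalCone (A ⁻¹' S) z ⊆ (fun ψ => ψ ∘L A) '' normalCone S (A z) := by
  intro φ hφ
  have hker : ∀ w, A w = 0 → φ w = 0 := fun w hw => by
    have hle := hφ (z + w) (by simpa [hw] using hz)
    have hge := hφ (z - w) (by simpa [hw] using hz)
    simp only [add_sub_cancel_left, sub_sub_cancel_left, map_neg] at hle hge
    linarith
  refine ⟨φ ∘L B, fun s hs => ?_, ContinuousLinearMap.ext fun w => ?_⟩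
  · simpa using hφ (z + B (s - A z)) (by simpa [hAB _] using hs)
  · have := hker (w - B (A w)) (by simp [hAB _])
    simp only [map_sub] at this
    simp [sub_eq_zero.mp this]

end NormalCone

section Coderivative

variable {X Y : Type*} [AddCommGroup X] [Module ℝ X] [TopologicalSpace X]
  [AddCommGroup Y] [Module ℝ Y] [TopologicalSpace Y]

theorem mem_coderiv_iff {F : X → Set Y} {xb : X} {yb : Y} {v : Y →L[ℝ] ℝ} {u : X →L[ℝ] ℝ} :
    u ∈ coderiv F xb yb v ↔ u.coprod (-v) ∈ normalCone (gph F) (xb, yb) := by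
  simp only [coderiv, normalCone, gph, Set.mem_ofPred_eq, Prod.forall, Prod.mk_sub_mk,
    ContinuousLinearMap.coprod_apply, neg_apply, ← sub_eq_add_neg]

theorem add_coderiv_subset_coderiv_add (F₁ F₂ : X → Set Y) (xb : X) (yb₁ yb₂ : Y)
    (v : Y →L[ℝ] ℝ) :
    coderiv F₁ xb yb₁ v + coderiv F₂ xb yb₂ v ⊆
      coderiv (fun x => F₁ x + F₂ x) xb (yb₁ + yb₂) v := by
  rintro _ ⟨u₁, hu₁, u₂, hu₂, rfl⟩ x _ ⟨y₁, hy₁, y₂, hy₂, rfl⟩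
  have h₁ := hu₁ x y₁ hy₁
  have h₂ := hu₂ x y₂ hy₂
  simp only [add_apply, map_sub, map_add] at h₁ h₂ ⊢
  linarith

open ContinuousLinearMap in
theorem coderiv_add_subset_add_coderiv [ContinuousAdd X] [ContinuousAdd Y] {F₁ F₂ : X → Set Y}
    (hF₁ : IsPolyhedral (gph F₁)) (hF₂ : IsGPolyhedral (gph F₂)) {xb : X} {yb₁ yb₂ : Y}
    (h₁ : yb₁ ∈ F₁ xb) (h₂ : yb₂ ∈ F₂ xb) (v : Y →L[ℝ] ℝ) :
    coderiv (fun x => F₁ x + F₂ x) xb (yb₁ + yb₂) v ⊆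
      coderiv F₁ xb yb₁ v + coderiv F₂ xb yb₂ v := by
  intro u hu
  let π₁ : X × Y × Y →L[ℝ] X × Y := (fst ℝ X (Y × Y)).prod (fst ℝ Y Y ∘L snd ℝ X (Y × Y))
  let π₂ : X × Y × Y →L[ℝ] X × Y := (fst ℝ X (Y × Y)).prod (snd ℝ Y Y ∘L snd ℝ X (Y × Y))
  let σ₁ : X × Y →L[ℝ] X × Y × Y := (fst ℝ X Y).prod (inl ℝ Y Y ∘L snd ℝ X Y)
  let σ₂ : X × Y →L[ℝ] X × Y × Y := (fst ℝ X Y).prod (inr ℝ Y Y ∘L snd ℝ X Y)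
  have hπσ₁ : Function.LeftInverse π₁ σ₁ := fun _ => rfl
  have hπσ₂ : Function.LeftInverse π₂ σ₂ := fun _ => rfl
  have hφ : u.coprod ((-v).coprod (-v)) ∈
      normalCone (π₁ ⁻¹' gph F₁ ∩ π₂ ⁻¹' gph F₂) (xb, yb₁, yb₂) := by
    rintro ⟨x, y₁, y₂⟩ ⟨hy₁, hy₂⟩
    have := hu x (y₁ + y₂) (add_mem_add hy₁ hy₂)
    simp only [Prod.mk_sub_mk, coprod_apply, neg_apply, map_sub, map_add] at this ⊢
    linarith
  rw [normalCone_inter_of_isPolyhedral_of_isGPolyhedral (hF₁.preimage π₁)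
    (hF₂.preimage π₂ hπσ₂.surjective) ⟨h₁, h₂⟩] at hφ
  obtain ⟨_, hφ₁, _, hφ₂, hφ⟩ := hφ
  obtain ⟨ψ₁, hψ₁, rfl⟩ := normalCone_preimage_subset π₁ σ₁ hπσ₁ h₁ hφ₁
  obtain ⟨ψ₂, hψ₂, rfl⟩ := normalCone_preimage_subset π₂ σ₂ hπσ₂ h₂ hφ₂
  have hv₁ : ψ₁ ∘L inr ℝ X Y = -v := ext fun y => by
    simpa [π₁, π₂, Prod.mk_zero_zero] using congr($hφ (0, y, 0))
  have hv₂ : ψ₂ ∘L inr ℝ X Y = -v := ext fun y => by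
    simpa [π₁, π₂, Prod.mk_zero_zero] using congr($hφ (0, 0, y))
  have hu : ψ₁ ∘L inl ℝ X Y + ψ₂ ∘L inl ℝ X Y = u := ext fun x => by
    simpa [π₁, π₂, Prod.mk_zero_zero] using congr($hφ (x, 0, 0))
  refine ⟨ψ₁ ∘L inl ℝ X Y, ?_, ψ₂ ∘L inl ℝ X Y, ?_, hu⟩
  · rwa [mem_coderiv_iff, ← hv₁, coprod_comp_inl_inr]
  · rwa [mem_coderiv_iff, ← hv₂, coprod_comp_inl_inr]

end Coderivative

variable {X : Type*} [AddCommGroup X] [Module ℝ X] [TopologicalSpace X]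
  [IsTopologicalAddGroup X] [ContinuousSMul ℝ X] [LocallyConvexSpace ℝ X] [T2Space X]
variable {Y : Type*} [AddCommGroup Y] [Module ℝ Y] [TopologicalSpace Y]
  [IsTopologicalAddGroup Y] [ContinuousSMul ℝ Y] [LocallyConvexSpace ℝ Y] [T2Space Y]
variable {Z : Type*} [AddCommGroup Z] [Module ℝ Z] [TopologicalSpace Z]
  [IsTopologicalAddGroup Z] [ContinuousSMul ℝ Z] [LocallyConvexSpace ℝ Z] [T2Space Z]

theorem coderivative_sum_rule
    (F₁ F₂ : X → Set Y)
    (hF₁ : IsPolyhedral (gph F₁)) (hF₂ : IsGPolyhedral (gph F₂))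
    (xb : X) (yb yb₁ yb₂ : Y)
    (h₁ : yb₁ ∈ F₁ xb) (h₂ : yb₂ ∈ F₂ xb) (hsum : yb = yb₁ + yb₂)
    (v : Y →L[ℝ] ℝ) :
    coderiv (fun x => F₁ x + F₂ x) xb yb v =
      coderiv F₁ xb yb₁ v + coderiv F₂ xb yb₂ v := by
  subst hsum
  exact (coderiv_add_subset_add_coderiv hF₁ hF₂ h₁ h₂ v).antisymm
    (add_coderiv_subset_coderiv_add F₁ F₂ xb yb₁ yb₂ v)
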